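/- Let G be a group satisfying (H1) and let H, K ∈ L(G). Suppose there exists D ∈ L(G) with H ∩ D = 1 and K ∩ D = 1, together with finite-index subgroups G₀, G₁ of G whose derived subgroups satisfy [G₀, G₀] ≤ ⟨H, D⟩ and [G₁, G₁] ≤ ⟨K, D⟩. Then H ∩ K ≤va H and H ∩ K ≤va K. -/

import Mathlib

/-!
Shrink to a finite-index normal subgroup `Q` that normalizes `H`, `K`, `D` and lies in `G₀ ⊓ G₁`.
Under (H1), a subgroup `V` normalized by `Q` with `V ⊓ Q` abelian is virtually abelian and lies in
`L(G)`, hence is trivial; in particular subgroups normalized by `Q` have trivial center, and from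
this one gets that `A ⊓ Q` centralizes `D` for every `A` normalized by `Q` with `A ⊓ D = ⊥`.

To see `⁅H ⊓ Q, H ⊓ Q⁆ ≤ K`, let `M = ⁅H ⊓ Q, H ⊓ Q⁆`, `K' = K ⊓ Q` and `C` the centralizer of
`K'`. As `D ≤ C`, every `m ∈ M ≤ K ⊔ D` is a product `k c` with `k ∈ K`, `c ∈ C`, and then
`c ∈ V = (M ⊔ K) ⊓ C`. Modulo `K'` the group `M` commutes with `K ⊔ D`, so commutators of
elements of `V ⊓ Q` lie in `K' ⊓ C`, the (trivial) center of `K'`. Hence `V = ⊥` and `m = k ∈ K`.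
-/

variable {G : Type*} [Group G]

/-- The conjugate `B ^ g = g⁻¹ * B * g` of a subgroup `B` by an element `g`. -/
def conjBy (B : Subgroup G) (g : G) : Subgroup G :=
  B.map (MulAut.conj g⁻¹).toMonoidHom

/-- A subgroup is virtually solvable if it has a solvable subgroup of finite index. -/
def VirtSolvable (H : Subgroup G) : Prop :=
  ∃ M : Subgroup G, M ≤ H ∧ M.relIndex H ≠ 0 ∧ IsSolvable ↥M

/-- A subgroup is virtually nilpotent if it has a nilpotent subgroup of finite index. -/
def VirtNilpotent (H : Subgroup G) : Prop :=
  ∃ M : Subgroup G, M ≤ H ∧ M.relIndex H ≠ 0 ∧ Group.IsNilpotent ↥M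

/-- Hypothesis (H1): every virtually solvable subgroup whose normalizer has finite index
(i.e. belonging to `L(G)`) is trivial. -/
def HypH1 (G : Type*) [Group G] : Prop :=
  ∀ H : Subgroup G, (Subgroup.normalizer (H : Set G)).FiniteIndex → VirtSolvable H → H = ⊥

/-- Hypothesis (H2): every nontrivial normal subgroup of `G` contains the derived subgroup
of some finite-index subgroup of `G`. -/
def HypH2 (G : Type*) [Group G] : Prop :=
  ∀ N : Subgroup G, N.Normal → N ≠ ⊥ →
    ∃ G₀ : Subgroup G, G₀.FiniteIndex ∧ ⁅G₀, G₀⁆ ≤ N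

/-- `VA K H` means `K ≤va H`: `K ≤ H` and `K` contains the derived subgroup of some
finite-index subgroup of `H`. -/
def VA (K H : Subgroup G) : Prop :=
  K ≤ H ∧ ∃ A : Subgroup G, A ≤ H ∧ A.relIndex H ≠ 0 ∧ ⁅A, A⁆ ≤ K

/-- A subgroup `B` is basal if its normalizer has finite index and every conjugate of `B`
either equals `B` or meets `B` trivially. -/
def IsBasal (B : Subgroup G) : Prop :=
  (Subgroup.normalizer (B : Set G)).FiniteIndex ∧ ∀ g : G, conjBy B g = B ∨ conjBy B g ⊓ B = ⊥

/-- The rigid normalizer `R(A)` of a basal subgroup `A`: the intersection of the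
normalizers of all basal subgroups meeting `A` trivially. -/
def rigidNormalizer (A : Subgroup G) : Subgroup G :=
  ⨅ B ∈ {B : Subgroup G | IsBasal B ∧ A ⊓ B = ⊥}, Subgroup.normalizer (B : Set G)

open Subgroup
open scoped Pointwise commutatorElement

section Normalizers

variable {X Y Z : Subgroup G}

lemma le_normalizer_inf (hX : Z ≤ normalizer (X : Set G)) (hY : Z ≤ normalizer (Y : Set G)) :
    Z ≤ normalizer ((X ⊓ Y : Subgroup G) : Set G) :=
  (le_inf hX hY).trans inf_normalizer_le_normalizer_inf

lemma le_normalizer_sup (hX : Z ≤ normalizer (X : Set G)) (hY : Z ≤ normalizer (Y : Set G)) :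
    Z ≤ normalizer ((X ⊔ Y : Subgroup G) : Set G) :=
  (le_inf hX hY).trans (normalizer_inf_normalizer_le_normalizer_sup X Y)

lemma le_normalizer_commutator (hX : Z ≤ normalizer (X : Set G))
    (hY : Z ≤ normalizer (Y : Set G)) : Z ≤ normalizer ((⁅X, Y⁆ : Subgroup G) : Set G) := by
  intro g hg
  rw [mem_normalizer_iff_map_conj_eq, map_commutator, mem_normalizer_iff_map_conj_eq.mp (hX hg),
    mem_normalizer_iff_map_conj_eq.mp (hY hg)]

lemma normalizer_le_normalizer_centralizer (X : Subgroup G) :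
    normalizer (X : Set G) ≤ normalizer (centralizer (X : Set G) : Set G) :=
  le_normalizer_of_normal_subgroupOf (centralizer_le_normalizer _)

end Normalizers

section Commutators

variable {X : Subgroup G} {a b : G}

lemma commutatorElement_mem_of_mem_left (ha : a ∈ X) (hb : b ∈ normalizer (X : Set G)) :
    ⁅a, b⁆ ∈ X := by
  rw [commutatorElement_def, mul_assoc, mul_assoc]
  exact mul_mem ha (by simpa [mul_assoc] using (mem_normalizer_iff.mp hb a⁻¹).mp (inv_mem ha))

lemma commutatorElement_mem_of_mem_right (ha : a ∈ normalizer (X : Set G)) (hb : b ∈ X) :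
    ⁅a, b⁆ ∈ X := by
  rw [commutatorElement_def]
  exact mul_mem ((mem_normalizer_iff.mp ha b).mp hb) (inv_mem hb)

lemma commutator_sup_left_le {H₁ H₂ K Y : Subgroup G} (hH₁ : H₁ ≤ normalizer (Y : Set G))
    (hH₂ : H₂ ≤ normalizer (Y : Set G)) (h₁ : ⁅H₁, K⁆ ≤ Y) (h₂ : ⁅H₂, K⁆ ≤ Y) :
    ⁅H₁ ⊔ H₂, K⁆ ≤ Y := by
  have hN : H₁ ⊔ H₂ ≤ normalizer (Y : Set G) := sup_le hH₁ hH₂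
  rw [commutator_le]
  intro g hg k hk
  rw [sup_eq_closure] at hg hN
  induction hg using closure_induction with
  | mem x hx =>
    rcases hx with hx | hx
    exacts [h₁ (commutator_mem_commutator hx hk), h₂ (commutator_mem_commutator hx hk)]
  | one => simp
  | mul x y hx _ ihx ihy =>
    rw [commutatorElement_mul_left_eq_conj_mul]
    exact mul_mem ((mem_normalizer_iff.mp (hN hx) _).mp ihy) ihx
  | inv x hx ih =>
    rw [commutatorElement_inv_left, ← commutatorElement_inv]
    simpa using (mem_normalizer_iff.mp (hN (inv_mem hx)) _).mp (inv_mem ih)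

end Commutators

lemma commutator_sup_inf_le {M B D Q : Subgroup G} [Q.Normal] (hMQ : M ≤ Q)
    (hQB : Q ≤ normalizer (B : Set G)) (hMD : M ≤ centralizer (D : Set G))
    (hDB : D ≤ normalizer ((B ⊓ Q : Subgroup G) : Set G)) :
    ⁅M ⊔ B ⊓ Q, B ⊔ D⁆ ≤ B ⊓ Q := by
  have hBB : B ≤ normalizer ((B ⊓ Q : Subgroup G) : Set G) :=
    le_normalizer_inf le_normalizer le_normalizer_of_normal
  refine commutator_sup_left_le (hMQ.trans (le_normalizer_inf hQB le_normalizer_of_normal))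
    le_normalizer ?_ (le_normalizer_iff_commutator_le_left.mp (sup_le hBB hDB))
  rw [commutator_comm]
  refine commutator_sup_left_le hBB hDB (le_inf ?_ ?_) ?_
  · exact le_normalizer_iff_commutator_le_left.mp (hMQ.trans hQB)
  · exact (commutator_mono le_rfl hMQ).trans (commutator_le_right B Q)
  · exact (commutator_eq_bot_iff_le_centralizer.mpr (le_centralizer_iff.mp hMD)).trans_le bot_le

lemma sup_inf_le_sup_inf_of_le_normalizer {M B Q : Subgroup G}
    (hMB : M ≤ normalizer (B : Set G)) (hMQ : M ≤ Q) : (M ⊔ B) ⊓ Q ≤ M ⊔ B ⊓ Q := by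
  rintro v ⟨hv, hvQ⟩
  obtain ⟨m, hm, b, hb, rfl⟩ : v ∈ (M : Set G) * (B : Set G) := by
    rwa [← coe_mul_of_left_le_normalizer_right M B hMB]
  have hbQ : b ∈ Q := by simpa using mul_mem (inv_mem (hMQ hm)) hvQ
  exact mul_mem (mem_sup_left hm) (mem_sup_right ⟨hb, hbQ⟩)

lemma le_of_sup_inf_eq_bot {M B C : Subgroup G} (hBC : B ≤ normalizer (C : Set G))
    (hM : M ≤ B ⊔ C) (hV : (M ⊔ B) ⊓ C = ⊥) : M ≤ B := by
  intro m hm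
  obtain ⟨k, hk, c, hc, rfl⟩ : m ∈ (B : Set G) * (C : Set G) := by
    rw [← coe_mul_of_left_le_normalizer_right B C hBC]
    exact hM hm
  have hc1 : c ∈ (M ⊔ B) ⊓ C :=
    ⟨by simpa using mul_mem (mem_sup_right (inv_mem hk)) (mem_sup_left hm), hc⟩
  rw [hV, mem_bot] at hc1
  simpa [hc1] using hk

namespace HypH1

variable (hH1 : HypH1 G) {Q : Subgroup G}
include hH1

lemma eq_bot_of_commute_inf [Q.FiniteIndex] {V : Subgroup G}
    (hQV : Q ≤ normalizer (V : Set G)) (hcomm : ∀ x ∈ V ⊓ Q, ∀ y ∈ V ⊓ Q, x * y = y * x) :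
    V = ⊥ := by
  refine hH1 V (finiteIndex_of_le hQV) ⟨V ⊓ Q, inf_le_left, ?_, ?_⟩
  · rw [inf_comm, inf_relIndex_right]
    exact isFiniteRelIndex_of_finiteIndex.relIndex_ne_zero
  · exact Group.isSolvable_of_comm fun x y ↦ Subtype.ext (hcomm x x.2 y y.2)

lemma inf_centralizer_eq_bot [Q.FiniteIndex] {X : Subgroup G} (hQX : Q ≤ normalizer (X : Set G)) :
    X ⊓ centralizer (X : Set G) = ⊥ :=
  hH1.eq_bot_of_commute_inf
    (le_normalizer_inf hQX (hQX.trans (normalizer_le_normalizer_centralizer X)))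
    fun _ hx y hy ↦ (hx.1.2 y hy.1.1).symm

/-- For `a ∈ A ⊓ Q` and `d ∈ D`, `⁅a, d⁆` lies in `D ⊓ Q` and in its centralizer (`a` centralizes
`D ⊓ Q` as `⁅A ⊓ Q, D ⊓ Q⁆ ≤ A ⊓ D = ⊥`, and `d` normalizes `D ⊓ Q`), i.e. in the center of
`D ⊓ Q`, which (H1) kills. -/
lemma inf_le_centralizer [Q.Normal] [Q.FiniteIndex] {A D : Subgroup G}
    (hQA : Q ≤ normalizer (A : Set G)) (hQD : Q ≤ normalizer (D : Set G)) (hAD : A ⊓ D = ⊥) :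
    A ⊓ Q ≤ centralizer (D : Set G) := by
  set D' := D ⊓ Q
  have hDD' : D ≤ normalizer (D' : Set G) := le_normalizer_inf le_normalizer le_normalizer_of_normal
  have hZ : D' ⊓ centralizer (D' : Set G) = ⊥ :=
    hH1.inf_centralizer_eq_bot (le_normalizer_inf hQD le_normalizer_of_normal)
  have hAD' : A ⊓ Q ≤ centralizer (D' : Set G) := by
    rintro a ⟨haA, haQ⟩ z ⟨hzD, hzQ⟩
    have h : ⁅a, z⁆ ∈ A ⊓ D :=
      ⟨commutatorElement_mem_of_mem_left haA (hQA hzQ),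
        commutatorElement_mem_of_mem_right (hQD haQ) hzD⟩
    rw [hAD, mem_bot, commutatorElement_eq_one_iff_mul_comm] at h
    exact h.symm
  intro a ha d hd
  have h : ⁅a, d⁆ ∈ D' ⊓ centralizer (D' : Set G) :=
    ⟨⟨commutatorElement_mem_of_mem_right (hQD ha.2) hd,
        commutatorElement_mem_of_mem_left ha.2 (le_normalizer_of_normal (K := ⊤) (mem_top d))⟩,
      commutatorElement_mem_of_mem_left (hAD' ha)
        (normalizer_le_normalizer_centralizer D' (hDD' hd))⟩
  rw [hZ, mem_bot, commutatorElement_eq_one_iff_mul_comm] at h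
  exact h.symm

lemma commutator_inf_le [Q.Normal] [Q.FiniteIndex] {A B D : Subgroup G}
    (hQA : Q ≤ normalizer (A : Set G)) (hQB : Q ≤ normalizer (B : Set G))
    (hQD : Q ≤ normalizer (D : Set G)) (hAD : A ⊓ D = ⊥) (hBD : B ⊓ D = ⊥)
    (hQQ : ⁅Q, Q⁆ ≤ B ⊔ D) :
    ⁅A ⊓ Q, A ⊓ Q⁆ ≤ B := by
  set B' := B ⊓ Q
  set M := ⁅A ⊓ Q, A ⊓ Q⁆
  set C := centralizer (B' : Set G)
  have hMQ : M ≤ Q := (commutator_le_self _).trans inf_le_right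
  have hMBD : M ≤ B ⊔ D := (commutator_mono inf_le_right inf_le_right).trans hQQ
  have hDC : D ≤ C := le_centralizer_iff.mp (hH1.inf_le_centralizer hQB hQD hBD)
  have hQB' : Q ≤ normalizer (B' : Set G) := le_normalizer_inf hQB le_normalizer_of_normal
  have hBC : B ≤ normalizer (C : Set G) :=
    (le_normalizer_inf le_normalizer le_normalizer_of_normal).trans
      (normalizer_le_normalizer_centralizer B')
  have hcomm : ⁅M ⊔ B', B ⊔ D⁆ ≤ B' :=
    commutator_sup_inf_le hMQ hQB
      ((commutator_le_self _).trans (hH1.inf_le_centralizer hQA hQD hAD))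
      (hDC.trans (centralizer_le_normalizer _))
  have hQAQ : Q ≤ normalizer ((A ⊓ Q : Subgroup G) : Set G) :=
    le_normalizer_inf hQA le_normalizer_of_normal
  refine le_of_sup_inf_eq_bot hBC (hMBD.trans (sup_le_sup_left hDC B)) ?_
  refine hH1.eq_bot_of_commute_inf (le_normalizer_inf
    (le_normalizer_sup (le_normalizer_commutator hQAQ hQAQ) hQB)
    (hQB'.trans (normalizer_le_normalizer_centralizer _))) ?_
  rintro v ⟨⟨hv, hvC⟩, hvQ⟩ w ⟨⟨hw, hwC⟩, hwQ⟩
  have hMB' := sup_inf_le_sup_inf_of_le_normalizer (hMQ.trans hQB) hMQ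
  have h : ⁅v, w⁆ ∈ B' ⊓ C :=
    ⟨hcomm (commutator_mem_commutator (hMB' ⟨hv, hvQ⟩)
        (sup_le hMBD (inf_le_left.trans le_sup_left) (hMB' ⟨hw, hwQ⟩))),
      commutatorElement_mem_of_mem_left hvC (le_normalizer hwC)⟩
  rwa [hH1.inf_centralizer_eq_bot hQB', mem_bot, commutatorElement_eq_one_iff_mul_comm] at h

end HypH1

lemma va_inf_of_commutator_inf_le {H K Q : Subgroup G} [Q.FiniteIndex]
    (h : ⁅H ⊓ Q, H ⊓ Q⁆ ≤ K) : VA (H ⊓ K) H :=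
  ⟨inf_le_left, H ⊓ Q, inf_le_left,
    by rw [inf_comm, inf_relIndex_right]; exact isFiniteRelIndex_of_finiteIndex.relIndex_ne_zero,
    le_inf ((commutator_le_self _).trans inf_le_left) h⟩

theorem statement6 (hH1 : HypH1 G) (H K D : Subgroup G)
    (hHL : (Subgroup.normalizer (H : Set G)).FiniteIndex) (hKL : (Subgroup.normalizer (K : Set G)).FiniteIndex)
    (hDL : (Subgroup.normalizer (D : Set G)).FiniteIndex)
    (hHD : H ⊓ D = ⊥) (hKD : K ⊓ D = ⊥)
    (G₀ G₁ : Subgroup G) (h₀ : G₀.FiniteIndex) (h₁ : G₁.FiniteIndex)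
    (hc₀ : ⁅G₀, G₀⁆ ≤ H ⊔ D) (hc₁ : ⁅G₁, G₁⁆ ≤ K ⊔ D) :
    VA (H ⊓ K) H ∧ VA (H ⊓ K) K := by
  have hQ := normalCore_le
    (normalizer (H : Set G) ⊓ normalizer (K : Set G) ⊓ normalizer (D : Set G) ⊓ G₀ ⊓ G₁)
  simp only [le_inf_iff] at hQ
  obtain ⟨⟨⟨⟨hQH, hQK⟩, hQD⟩, hQG₀⟩, hQG₁⟩ := hQ
  exact ⟨va_inf_of_commutator_inf_le (hH1.commutator_inf_le hQH hQK hQD hHD hKD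
      ((commutator_mono hQG₁ hQG₁).trans hc₁)),
    inf_comm K H ▸ va_inf_of_commutator_inf_le (hH1.commutator_inf_le hQK hQH hQD hKD hHD
      ((commutator_mono hQG₀ hQG₀).trans hc₀))⟩
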